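/- For all positive integers i, j, k, there exists a bipartite tournament whose niche graph is the disjoint union K_i ∪ K_j ∪ K_k, with one partite set of size i+j inducing K_i ∪ K_j and the other of size k inducing K_k. -/

import Mathlib

structure BipTournament (α : Type*) where
  U : Set α
  V : Set α
  A : α → α → Prop
  disj : Disjoint U V
  cover : U ∪ V = Set.univ
  orient : ∀ u ∈ U, ∀ v ∈ V, Xor' (A u v) (A v u)
  arcs : ∀ x y, A x y → (x ∈ U ∧ y ∈ V) ∨ (x ∈ V ∧ y ∈ U)

def BipTournament.outN {α : Type*} (D : BipTournament α) (x : α) : Set α := {y | D.A x y}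

def BipTournament.inN {α : Type*} (D : BipTournament α) (x : α) : Set α := {y | D.A y x}

def BipTournament.niche {α : Type*} (D : BipTournament α) : SimpleGraph α where
  Adj x y := x ≠ y ∧ ((∃ w, D.A x w ∧ D.A y w) ∨ (∃ w, D.A w x ∧ D.A w y))
  symm := by
    refine ⟨?_⟩
    rintro x y ⟨h, h'⟩
    exact ⟨h.symm, h'.imp (fun ⟨w, a, b⟩ => ⟨w, b, a⟩) (fun ⟨w, a, b⟩ => ⟨w, b, a⟩)⟩
  loopless := ⟨fun x h => h.1 rfl⟩

/-!
Split the left part `α` by a predicate `p`: each vertex satisfying `p` dominates the whole right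
part `β`, and the whole right part dominates every other vertex of `α`. Two left vertices then
share an out-neighbour (if both satisfy `p`) or an in-neighbour (if neither does), while any two
right vertices share an in-neighbour or an out-neighbour as soon as `α` is nonempty; since every
arc crosses the bipartition, a left and a right vertex never share a neighbour. With
`p a := a < i` on `Fin (i + j)` the niche graph is `K_i ∪ K_j ∪ K_k`.
-/

namespace BipTournament

variable {α β : Type*}

def ofPred (p : α → Prop) : BipTournament (α ⊕ β) where
  U := Set.range Sum.inl
  V := Set.range Sum.inr
  A := Sum.elim (fun a => Sum.elim (fun _ => False) fun _ => p a)
    fun _ => Sum.elim (fun a => ¬p a) fun _ => False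
  disj := Set.isCompl_range_inl_range_inr.disjoint
  cover := Set.range_inl_union_range_inr
  orient := by
    rintro _ ⟨a, rfl⟩ _ ⟨b, rfl⟩
    exact xor_not_right.mpr Iff.rfl
  arcs := by
    rintro (a | b) (a' | b') h
    exacts [h.elim, .inl ⟨⟨a, rfl⟩, ⟨b', rfl⟩⟩, .inr ⟨⟨b, rfl⟩, ⟨a', rfl⟩⟩, h.elim]

variable (p : α → Prop)

theorem ofPred_niche_adj_inl_inl {a a' : α} :
    (ofPred (β := β) p).niche.Adj (.inl a) (.inl a') ↔
      a ≠ a' ∧ Nonempty β ∧ (p a ↔ p a') := by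
  simp only [niche, ofPred, ne_eq, Sum.inl.injEq]
  refine and_congr_right fun _ => ⟨?_, ?_⟩
  · rintro (⟨_ | b, ha, ha'⟩ | ⟨_ | b, ha, ha'⟩)
    · exact ha.elim
    · exact ⟨⟨b⟩, iff_of_true ha ha'⟩
    · exact ha.elim
    · exact ⟨⟨b⟩, iff_of_false ha ha'⟩
  · rintro ⟨⟨b⟩, hpp⟩
    by_cases ha : p a
    · exact .inl ⟨.inr b, ha, hpp.mp ha⟩
    · exact .inr ⟨.inr b, ha, mt hpp.mpr ha⟩

theorem ofPred_niche_adj_inr_inr {b b' : β} :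
    (ofPred p).niche.Adj (.inr b) (.inr b') ↔ b ≠ b' ∧ Nonempty α := by
  simp only [niche, ofPred, ne_eq, Sum.inr.injEq]
  refine and_congr_right fun _ => ⟨?_, ?_⟩
  · rintro (⟨a | _, -, h⟩ | ⟨a | _, -, h⟩)
    · exact ⟨a⟩
    · exact h.elim
    · exact ⟨a⟩
    · exact h.elim
  · rintro ⟨a⟩
    by_cases ha : p a
    · exact .inr ⟨.inl a, ha, ha⟩
    · exact .inl ⟨.inl a, ha, ha⟩

theorem not_ofPred_niche_adj_inl_inr (a : α) (b : β) : ¬(ofPred p).niche.Adj (.inl a) (.inr b) := by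
  rintro ⟨-, ⟨_ | _, h, h'⟩ | ⟨_ | _, h, h'⟩⟩
  all_goals first | exact h | exact h'

end BipTournament

theorem stmt12 (i j k : ℕ) (hi : 0 < i) (hk : 0 < k) :
    ∃ D : BipTournament (Fin (i + j) ⊕ Fin k),
      D.U = Set.range Sum.inl ∧ D.V = Set.range Sum.inr ∧
      D.niche = SimpleGraph.fromRel (fun x y =>
        match x, y with
        | Sum.inl a, Sum.inl b => (a.val < i ∧ b.val < i) ∨ (i ≤ a.val ∧ i ≤ b.val)
        | Sum.inr _, Sum.inr _ => True
        | _, _ => False) := by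
  have : Nonempty (Fin k) := ⟨⟨0, hk⟩⟩
  refine ⟨BipTournament.ofPred fun a : Fin (i + j) => a.val < i, rfl, rfl, ?_⟩
  ext (a | b) (a' | b')
  · rw [BipTournament.ofPred_niche_adj_inl_inl, SimpleGraph.fromRel_adj]
    simp only [ne_eq, Sum.inl.injEq, this, true_and]
    omega
  · simpa using BipTournament.not_ofPred_niche_adj_inl_inr _ a b'
  · simpa using mt SimpleGraph.Adj.symm (BipTournament.not_ofPred_niche_adj_inl_inr _ a' b)
  · simp only [BipTournament.ofPred_niche_adj_inr_inr, SimpleGraph.fromRel_adj, ne_eq, Sum.inr.injEq]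
    exact and_congr_right fun _ => iff_of_true ⟨⟨0, by omega⟩⟩ (.inl trivial)
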